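/- arXiv:1504.07783 — 3 statements merged into one kernel-verified Lean document; each statement's English description precedes it below -/
import Mathlib

section
/- The set F_∞ = {(s₁,s₂,r,h) ∈ ℝ²×(ℝ⁺)² : |s₁| ≤ 1/2, |s₂| ≤ 1/2, ε₀^{−2} ≤ r ≤ ε₀²} is a fundamental domain for the action of Γ_∞ on H²×H²: the boundary of F_∞ has Lebesgue measure 0, the translates γ(F_∞) for γ ∈ Γ_∞ cover H²×H², and for every γ ∈ Γ_∞ with γ ≠ 1 there is no point Z such that both Z and γ(Z) lie in the interior of F_∞. -/
noncomputable section

open scoped Classical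
open MeasureTheory

namespace Hilbert

/-- `k₀ = 2` if `k ≡ 1 (mod 4)` and `k₀ = 1` otherwise. -/
def k0 (k : ℕ) : ℝ := if k % 4 = 1 then 2 else 1

/-- `ω = (1 + √k)/k₀`. -/
def omg (k : ℕ) : ℝ := (1 + Real.sqrt k) / k0 k

/-- `ω' = (1 - √k)/k₀`, the algebraic conjugate of `ω`. -/
def omg' (k : ℕ) : ℝ := (1 - Real.sqrt k) / k0 k

/-- The ring `R = ℤ[ω]`, realized inside `ℝ × ℝ` via the pair of real embeddings
`α ↦ (α, α')` of `K = ℚ(√k)`. -/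
def R (k : ℕ) : Subring (ℝ × ℝ) := Subring.closure {(omg k, omg' k)}

/-- The ambient space `ℝ⁴`, with coordinates `(x₁, x₂, y₁, y₂)`. -/
abbrev Pt : Type := ℝ × ℝ × ℝ × ℝ

def x1 (p : Pt) : ℝ := p.1
def x2 (p : Pt) : ℝ := p.2.1
def y1 (p : Pt) : ℝ := p.2.2.1
def y2 (p : Pt) : ℝ := p.2.2.2

/-- `H² × H²`, identified with an open subset of `ℝ⁴`. -/
def HH : Set Pt := {p | 0 < y1 p ∧ 0 < y2 p}

/-- The coordinate `s₁`, determined by `x₁ = s₁ + s₂ ω`, `x₂ = s₁ + s₂ ω'`. -/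
def s1 (k : ℕ) (p : Pt) : ℝ := (omg' k * x1 p - omg k * x2 p) / (omg' k - omg k)

/-- The coordinate `s₂`. -/
def s2 (k : ℕ) (p : Pt) : ℝ := (x1 p - x2 p) / (omg k - omg' k)

/-- The ratio `r = y₁/y₂`. -/
def rr (p : Pt) : ℝ := y1 p / y2 p

/-- The height `h = y₁ y₂`. -/
def hh (p : Pt) : ℝ := y1 p * y2 p

/-- `‖cZ+d‖ = ((cx₁+d)² + c²y₁²)((c'x₂+d')² + c'²y₂²)`, where `c = (c, c')`, `d = (d, d')`
are given by their two real embeddings. -/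
def HNorm (c d : ℝ × ℝ) (p : Pt) : ℝ :=
  ((c.1 * x1 p + d.1) ^ 2 + c.1 ^ 2 * y1 p ^ 2) *
    ((c.2 * x2 p + d.2) ^ 2 + c.2 ^ 2 * y2 p ^ 2)

/-- `S = {(c,d) ∈ R² : cR + dR = R}`. -/
def Spairs (k : ℕ) : Set (R k × R k) := {cd | Ideal.span {cd.1, cd.2} = ⊤}

/-- `V_{c,d}^≥ = {Z ∈ H²×H² : ‖cZ+d‖ ≥ 1}`. -/
def Vge (k : ℕ) (cd : R k × R k) : Set Pt :=
  {p ∈ HH | 1 ≤ HNorm (cd.1 : ℝ × ℝ) (cd.2 : ℝ × ℝ) p}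

/-- `V_{c,d}^≤ = {Z ∈ H²×H² : ‖cZ+d‖ ≤ 1}`. -/
def Vle (k : ℕ) (cd : R k × R k) : Set Pt :=
  {p ∈ HH | HNorm (cd.1 : ℝ × ℝ) (cd.2 : ℝ × ℝ) p ≤ 1}

/-- `V_{c,d} = {Z ∈ H²×H² : ‖cZ+d‖ = 1}`. -/
def Veq (k : ℕ) (cd : R k × R k) : Set Pt :=
  {p ∈ HH | HNorm (cd.1 : ℝ × ℝ) (cd.2 : ℝ × ℝ) p = 1}

/-- `F₀ = {Z ∈ H²×H² : ‖cZ+d‖ ≥ 1 for all (c,d) ∈ S}`. -/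
def F0 (k : ℕ) : Set Pt :=
  {p ∈ HH | ∀ cd ∈ Spairs k, 1 ≤ HNorm (cd.1 : ℝ × ℝ) (cd.2 : ℝ × ℝ) p}

/-- `F_∞ = {(s₁,s₂,r,h) : |s₁| ≤ 1/2, |s₂| ≤ 1/2, ε₀⁻² ≤ r ≤ ε₀²}`, where `ε` stands
for the fundamental unit `ε₀`. -/
def FInf (k : ℕ) (ε : ℝ) : Set Pt :=
  {p ∈ HH | |s1 k p| ≤ 1 / 2 ∧ |s2 k p| ≤ 1 / 2 ∧ (ε ^ 2)⁻¹ ≤ rr p ∧ rr p ≤ ε ^ 2}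

/-- `F = F_∞ ∩ F₀`. -/
def F (k : ℕ) (ε : ℝ) : Set Pt := FInf k ε ∩ F0 k

/-- `SL₂(R)`. -/
abbrev SL (k : ℕ) := Matrix.SpecialLinearGroup (Fin 2) (R k)

/-- Möbius action on the upper half-plane: image of `x + y i` under `(a b; c d)`. -/
def moeb (a b c d x y : ℝ) : ℝ × ℝ :=
  (((a * x + b) * (c * x + d) + a * c * y ^ 2) / ((c * x + d) ^ 2 + c ^ 2 * y ^ 2),
    y / ((c * x + d) ^ 2 + c ^ 2 * y ^ 2))

/-- The action of `γ ∈ SL₂(R)` on `H²×H²`: `γ` acts on the first factor through the first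
embedding and through the conjugate matrix `γ'` (second embedding) on the second factor.
This descends to the Hilbert modular group `PSL₂(R)`. -/
def act (k : ℕ) (g : SL k) (p : Pt) : Pt :=
  ((moeb (g.1 0 0 : ℝ × ℝ).1 (g.1 0 1 : ℝ × ℝ).1 (g.1 1 0 : ℝ × ℝ).1 (g.1 1 1 : ℝ × ℝ).1
      (x1 p) (y1 p)).1,
   (moeb (g.1 0 0 : ℝ × ℝ).2 (g.1 0 1 : ℝ × ℝ).2 (g.1 1 0 : ℝ × ℝ).2 (g.1 1 1 : ℝ × ℝ).2
      (x2 p) (y2 p)).1,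
   (moeb (g.1 0 0 : ℝ × ℝ).1 (g.1 0 1 : ℝ × ℝ).1 (g.1 1 0 : ℝ × ℝ).1 (g.1 1 1 : ℝ × ℝ).1
      (x1 p) (y1 p)).2,
   (moeb (g.1 0 0 : ℝ × ℝ).2 (g.1 0 1 : ℝ × ℝ).2 (g.1 1 0 : ℝ × ℝ).2 (g.1 1 1 : ℝ × ℝ).2
      (x2 p) (y2 p)).2)

/-- The pair of real embeddings of a unit of `R`. -/
def unitVal (k : ℕ) (u : (R k)ˣ) : ℝ × ℝ := ((u : R k) : ℝ × ℝ)

/-- `e` is the fundamental unit of `R`: the smallest unit of `R` greater than `1`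
(with respect to the first embedding). -/
def IsFundUnit (k : ℕ) (e : (R k)ˣ) : Prop :=
  1 < (unitVal k e).1 ∧
    ∀ v : (R k)ˣ, 1 < (unitVal k v).1 → (unitVal k e).1 ≤ (unitVal k v).1

/-- The real number `ε₀ > 1`, the fundamental unit under the first embedding. -/
def eps (k : ℕ) (e : (R k)ˣ) : ℝ := (unitVal k e).1


/-- The norm `N(c) = c c'` of an element of `R` (as a real number). -/
def Nm (k : ℕ) (c : R k) : ℝ := ((c : ℝ × ℝ)).1 * ((c : ℝ × ℝ)).2

/-- A subset `C` of `H²×H²` is hyperbolically bounded if it is bounded in the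
Euclidean metric and `y₁, y₂ > ε` on `C` for some `ε > 0`. -/
def HypBounded (C : Set Pt) : Prop :=
  C ⊆ HH ∧ Bornology.IsBounded C ∧ ∃ ε > (0 : ℝ), ∀ p ∈ C, ε < y1 p ∧ ε < y2 p

/-- `V_{C,μ} = {(c,d) ∈ R × R : ‖cZ+d‖ ≤ μ for some Z ∈ C}`. -/
def VCmu (k : ℕ) (C : Set Pt) (μ : ℝ) : Set (R k × R k) :=
  {cd | ∃ p ∈ C, HNorm (cd.1 : ℝ × ℝ) (cd.2 : ℝ × ℝ) p ≤ μ}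

/-- The conditions (8) of Theorem `FiniteSides` on a pair `(c,d) ∈ R²`. -/
def SCond (k : ℕ) (ε : ℝ) (cd : R k × R k) : Prop :=
  cd.1 ≠ 0 ∧ Ideal.span {cd.1, cd.2} = ⊤ ∧
    |Nm k cd.1| ≤ 2 * k / (k0 k) ^ 2 ∧
    |((cd.2 : ℝ × ℝ)).1 / ((cd.1 : ℝ × ℝ)).1| <
      ε * Real.sqrt (2 * k / (Nm k cd.1 ^ 2 * (k0 k) ^ 2) - (k0 k) ^ 2 / (2 * k)) +
        (1 + omg k) / 2 ∧
    |((cd.2 : ℝ × ℝ)).2 / ((cd.1 : ℝ × ℝ)).2| <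
      ε * Real.sqrt (2 * k / (Nm k cd.1 ^ 2 * (k0 k) ^ 2) - (k0 k) ^ 2 / (2 * k)) +
        (1 - omg' k) / 2

/-- `S₁` is a set of representatives, up to multiplication by units of `R`, of the pairs
`(c,d) ∈ R²` satisfying the conditions `SCond`. -/
def IsRepSet (k : ℕ) (ε : ℝ) (S1 : Set (R k × R k)) : Prop :=
  (∀ cd ∈ S1, SCond k ε cd) ∧
    (∀ cd : R k × R k, SCond k ε cd →
      ∃ ab ∈ S1, ∃ u : (R k)ˣ, cd.1 = (u : R k) * ab.1 ∧ cd.2 = (u : R k) * ab.2) ∧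
    (∀ ab ∈ S1, ∀ ab' ∈ S1,
      (∃ u : (R k)ˣ, ab'.1 = (u : R k) * ab.1 ∧ ab'.2 = (u : R k) * ab.2) → ab = ab')

/-- The family `𝒱_∞ = {V_i^± : i = 1,2,3}`. -/
def VfamInf (k : ℕ) (ε : ℝ) : Set (Set Pt) :=
  { {p ∈ HH | s1 k p = 1 / 2}, {p ∈ HH | s1 k p = -(1 / 2)},
    {p ∈ HH | s2 k p = 1 / 2}, {p ∈ HH | s2 k p = -(1 / 2)},
    {p ∈ HH | rr p = ε ^ 2}, {p ∈ HH | rr p = (ε ^ 2)⁻¹} }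

/-- The family `𝒱 = {V_{c,d} : (c,d) ∈ S, c ≠ 0}`. -/
def Vfam (k : ℕ) : Set (Set Pt) :=
  {V | ∃ cd ∈ Spairs k, cd.1 ≠ 0 ∧ V = Veq k cd}

/-- The family `𝓜 = {γ(M) : γ ∈ Γ, M ∈ 𝒱 ∪ 𝒱_∞}`. -/
def Mfam (k : ℕ) (ε : ℝ) : Set (Set Pt) :=
  {M | ∃ g : SL k, ∃ V ∈ Vfam k ∪ VfamInf k ε, M = act k g '' V}

/-- `ω` as an element of `R`. -/
def omR (k : ℕ) : R k := ⟨(omg k, omg' k), Subring.subset_closure rfl⟩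

/-- The side-pairing transformations: `γ ≠ 1` (in `PSL₂(R)`) such that `F ∩ γ⁻¹(F)` has
Hausdorff dimension `3`. -/
def SidePairings (k : ℕ) (ε : ℝ) : Set (SL k) :=
  {g | g ≠ 1 ∧ g.1 ≠ -1 ∧ dimH (F k ε ∩ act k g⁻¹ '' F k ε) = 3}

/-!
Inside the open set `H² × H²`, the conditions defining `F_∞` are four linear inequalities in
`(x₁, x₂, y₁, y₂)`: `|s₁| ≤ 1/2`, `|s₂| ≤ 1/2`, `y₂ ≤ ε₀² y₁` and `y₁ ≤ ε₀² y₂`. Nonzero linear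
functionals are open maps, so the interior of `F_∞` is cut out by the strict inequalities and its
boundary lies in finitely many hyperplanes, which are null.

An element `(a b; 0 d)` of `Γ_∞` acts by `x ↦ a² x + a b`, `y ↦ a² y` in both embeddings, and
multiplies `r` by `a⁴` because `N(a) = ±1`. A power `a = ε₀ⁿ` brings `r` into `[ε₀⁻², ε₀²]`, and
a translation by the nearest point of the lattice `R = ℤ + ℤω` brings `s₁, s₂` into `[-1/2, 1/2]`.
Conversely, if `Z` and `γ Z` are both interior, then `ε₀⁻¹ < |a| < ε₀`, so `|a| = 1` by the
minimality of `ε₀`, and then `a = a' = ±1`; now `γ` translates `(s₁, s₂)` by the integer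
coordinates of `ab`, which therefore vanish, so `b = 0` and `γ = ±1`.
-/

end Hilbert

open Set

section Topology

variable {X : Type*} [TopologicalSpace X] {ι : Type*}

theorem frontier_iInter_subset_of_finite [Finite ι] (f : ι → Set X) :
    frontier (⋂ i, f i) ⊆ ⋃ i, frontier (f i) := by
  rintro x ⟨hcl, hint⟩
  rw [interior_iInter_of_finite, mem_iInter, not_forall] at hint
  obtain ⟨i, hi⟩ := hint
  exact mem_iUnion.2 ⟨i, closure_mono (iInter_subset f i) hcl, hi⟩

theorem IsOpen.frontier_inter_inter_subset {U : Set X} (hU : IsOpen U) (s : Set X) :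
    frontier (U ∩ s) ∩ U ⊆ frontier s := by
  rintro x ⟨hx, hxU⟩
  rcases frontier_inter_subset U s hx with ⟨hfU, -⟩ | ⟨-, hx⟩
  · exact absurd hxU (disjoint_frontier_iff_isOpen.2 hU |>.notMem_of_mem_left hfU)
  · exact hx

end Topology

section Polyhedron

variable {E : Type*} [AddCommGroup E] [TopologicalSpace E] [ContinuousAdd E] [Module ℝ E]
  [ContinuousSMul ℝ E] {ι : Type*} [Finite ι] {U : Set E} {ℓ : ι → StrongDual ℝ E}
  {S : ι → Set ℝ}

theorem interior_inter_iInter_preimage (hU : IsOpen U) (hℓ : ∀ i, ℓ i ≠ 0) :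
    interior (U ∩ ⋂ i, ℓ i ⁻¹' S i) = U ∩ ⋂ i, ℓ i ⁻¹' interior (S i) := by
  simp only [interior_inter, hU.interior_eq, interior_iInter_of_finite,
    ((ℓ _).isOpenMap_of_ne_zero (hℓ _)).preimage_interior_eq_interior_preimage (ℓ _).continuous]

theorem frontier_inter_iInter_preimage_subset (hU : IsOpen U) (hℓ : ∀ i, ℓ i ≠ 0) :
    frontier (U ∩ ⋂ i, ℓ i ⁻¹' S i) ∩ U ⊆ ⋃ i, ℓ i ⁻¹' frontier (S i) := by
  refine (hU.frontier_inter_inter_subset _).trans ((frontier_iInter_subset_of_finite _).trans ?_)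
  simp only [((ℓ _).isOpenMap_of_ne_zero (hℓ _)).preimage_frontier_eq_frontier_preimage
    (ℓ _).continuous, subset_refl]

end Polyhedron

section Hyperplane

open MeasureTheory

variable {E : Type*} [NormedAddCommGroup E] [NormedSpace ℝ E] [FiniteDimensional ℝ E]
  [MeasurableSpace E] [BorelSpace E] (μ : Measure E) [μ.IsAddHaarMeasure]

theorem addHaar_preimage_singleton_eq_zero {ℓ : StrongDual ℝ E} (hℓ : ℓ ≠ 0) (c : ℝ) :
    μ (ℓ ⁻¹' {c}) = 0 := by
  obtain ⟨x, hx⟩ := DFunLike.ne_iff.1 hℓ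
  have hv : ℓ ((c / ℓ x) • x) = c := by simp [div_mul_cancel₀ _ hx]
  have : ℓ ⁻¹' {c} =
      (fun y => -((c / ℓ x) • x) + y) ⁻¹' (LinearMap.ker (ℓ : E →ₗ[ℝ] ℝ) : Set E) := by
    ext y; simp [hv, sub_eq_zero, neg_add_eq_sub]
  rw [this, measure_preimage_add]
  exact Measure.addHaar_submodule μ _ fun h =>
    hx (show x ∈ LinearMap.ker (ℓ : E →ₗ[ℝ] ℝ) from h ▸ Submodule.mem_top)

theorem addHaar_preimage_countable_eq_zero {ℓ : StrongDual ℝ E} (hℓ : ℓ ≠ 0) {s : Set ℝ}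
    (hs : s.Countable) : μ (ℓ ⁻¹' s) = 0 := by
  rw [← biUnion_preimage_singleton, measure_biUnion_null_iff hs]
  exact fun c _ => addHaar_preimage_singleton_eq_zero μ hℓ c

end Hyperplane

theorem Matrix.SpecialLinearGroup.fin_two_diag_mul_eq_one {A : Type*} [CommRing A]
    {g : Matrix.SpecialLinearGroup (Fin 2) A} (h10 : g.1 1 0 = 0) : g.1 0 0 * g.1 1 1 = 1 := by
  have := g.det_coe
  rwa [Matrix.det_fin_two, h10, mul_zero, sub_zero] at this

theorem Matrix.SpecialLinearGroup.eq_one_or_coe_eq_neg_one {A : Type*} [CommRing A]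
    {g : Matrix.SpecialLinearGroup (Fin 2) A} (h10 : g.1 1 0 = 0) (h01 : g.1 0 1 = 0)
    (h00 : g.1 0 0 = 1 ∨ g.1 0 0 = -1) : g = 1 ∨ g.1 = -1 := by
  have hdet := fin_two_diag_mul_eq_one h10
  rcases h00 with h | h
  · left
    ext i j
    fin_cases i <;> fin_cases j <;> simp_all
  · right
    have h11 : g.1 1 1 = -1 := by rw [h] at hdet; linear_combination -hdet
    ext i j
    fin_cases i <;> fin_cases j <;> simp_all

theorem Int.eq_zero_of_abs_lt_half {m : ℤ} {x : ℝ} (hx : |x| < 1 / 2) (hxm : |x + m| < 1 / 2) :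
    m = 0 := by
  have : |(m : ℝ)| < 1 :=
    calc |(m : ℝ)| = |(x + m) - x| := by ring_nf
      _ ≤ |x + m| + |x| := abs_sub _ _
      _ < 1 := by linarith
  exact Int.abs_lt_one_iff.1 (by exact_mod_cast this)

theorem exists_div_zpow_pow_four_mem_Icc {ε r : ℝ} (hε : 1 < ε) (hr : 0 < r) :
    ∃ n : ℤ, r / (ε ^ n) ^ 4 ∈ Icc (ε ^ 2)⁻¹ (ε ^ 2) := by
  have hε0 : 0 < ε := zero_lt_one.trans hε
  obtain ⟨n, hn1, hn2⟩ := exists_mem_Ico_zpow (mul_pos hr (pow_pos hε0 2))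
    (one_lt_pow₀ hε four_ne_zero)
  have hpow : (ε ^ n) ^ 4 = (ε ^ 4) ^ n := by
    rw [← zpow_natCast, ← zpow_mul, ← zpow_natCast ε 4, ← zpow_mul, mul_comm]
  have hpos : 0 < (ε ^ 4) ^ n := zpow_pos (by positivity) n
  rw [zpow_add_one₀ (by positivity)] at hn2
  refine ⟨n, ?_, ?_⟩ <;> rw [hpow]
  · rw [le_div_iff₀ hpos, inv_mul_le_iff₀ (by positivity), mul_comm]
    exact hn1
  · rw [div_le_iff₀ hpos]
    nlinarith

theorem abs_mem_Ioo_of_pow_four_mul_mem_Ioo {ε r t : ℝ} (hε : 0 < ε)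
    (hr : r ∈ Ioo (ε ^ 2)⁻¹ (ε ^ 2)) (htr : t ^ 4 * r ∈ Ioo (ε ^ 2)⁻¹ (ε ^ 2)) :
    |t| ∈ Ioo ε⁻¹ ε := by
  have hr0 : 0 < r := (inv_pos.2 (pow_pos hε 2)).trans hr.1
  have ht4 : |t| ^ 4 = t ^ 4 := Even.pow_abs ⟨2, rfl⟩ t
  constructor
  · rw [← pow_lt_pow_iff_left₀ (by positivity) (abs_nonneg t) four_ne_zero, ht4]
    calc ε⁻¹ ^ 4 = (ε ^ 2)⁻¹ / ε ^ 2 := by field_simp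
      _ < t ^ 4 * r / ε ^ 2 := by gcongr; exact htr.1
      _ ≤ t ^ 4 := by rw [div_le_iff₀ (by positivity)]; gcongr; exact hr.2.le
  · rw [← pow_lt_pow_iff_left₀ (abs_nonneg t) hε.le four_ne_zero, ht4]
    calc t ^ 4 = t ^ 4 * r / r := by field_simp
      _ < ε ^ 2 / r := by gcongr; exact htr.2
      _ < ε ^ 4 := by
        rw [div_lt_iff₀ hr0]
        calc ε ^ 2 = ε ^ 4 * (ε ^ 2)⁻¹ := by field_simp
          _ < ε ^ 4 * r := by gcongr; exact hr.1

namespace Hilbert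

instance : (volume : Measure Pt).IsAddHaarMeasure :=
  have : (volume : Measure (ℝ × ℝ)).IsAddHaarMeasure := Measure.prod.instIsAddHaarMeasure _ _
  have : (volume : Measure (ℝ × ℝ × ℝ)).IsAddHaarMeasure := Measure.prod.instIsAddHaarMeasure _ _
  Measure.prod.instIsAddHaarMeasure _ _

variable {k : ℕ} {ε : ℝ}

lemma k0_pos : 0 < k0 k := by unfold k0; split <;> norm_num

lemma omg_sub_omg' : omg k - omg' k = 2 * Real.sqrt k / k0 k := by
  unfold omg omg'; ring

lemma omg_sub_omg'_pos (hk : 0 < k) : 0 < omg k - omg' k := by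
  rw [omg_sub_omg']
  have := k0_pos (k := k)
  positivity

lemma exists_omg_add_omg'_eq_int : ∃ t : ℤ, omg k + omg' k = t := by
  refine ⟨if k % 4 = 1 then 1 else 2, ?_⟩
  unfold omg omg' k0
  split_ifs <;> push_cast <;> ring

lemma exists_omg_mul_omg'_eq_int : ∃ s : ℤ, omg k * omg' k = s := by
  have hsq : Real.sqrt k ^ 2 = k := Real.sq_sqrt k.cast_nonneg
  unfold omg omg' k0
  split_ifs with h
  · obtain ⟨q, rfl⟩ : ∃ q, k = 4 * q + 1 := ⟨k / 4, by omega⟩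
    refine ⟨-q, ?_⟩
    push_cast at hsq ⊢
    linear_combination (-1 / 4 : ℝ) * hsq
  · exact ⟨1 - k, by push_cast; linear_combination -hsq⟩

lemma mem_R_iff {x : ℝ × ℝ} :
    x ∈ R k ↔ ∃ m n : ℤ, x = ((m : ℝ) + n * omg k, (m : ℝ) + n * omg' k) := by
  constructor
  · intro hx
    obtain ⟨t, ht⟩ := exists_omg_add_omg'_eq_int (k := k)
    obtain ⟨s, hs⟩ := exists_omg_mul_omg'_eq_int (k := k)
    induction hx using Subring.closure_induction with
    | mem x hx => exact ⟨0, 1, by rw [Set.mem_singleton_iff.1 hx]; simp⟩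
    | zero => exact ⟨0, 0, by ext <;> simp⟩
    | one => exact ⟨1, 0, by ext <;> simp⟩
    | add x y _ _ hx hy =>
      obtain ⟨m, n, rfl⟩ := hx
      obtain ⟨m', n', rfl⟩ := hy
      exact ⟨m + m', n + n', by ext <;> simp only [Prod.mk_add_mk, Int.cast_add] <;> ring⟩
    | neg x _ hx =>
      obtain ⟨m, n, rfl⟩ := hx
      exact ⟨-m, -n, by ext <;> simp only [Prod.neg_mk, Int.cast_neg] <;> ring⟩
    | mul x y _ _ hx hy =>
      obtain ⟨m, n, rfl⟩ := hx
      obtain ⟨m', n', rfl⟩ := hy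
      -- `ω` and `ω'` are the roots of `X² - t X + s`
      refine ⟨m * m' - n * n' * s, m * n' + m' * n + n * n' * t, ?_⟩
      ext <;> simp only [Prod.mk_mul_mk, Int.cast_sub, Int.cast_mul, Int.cast_add] <;>
        [linear_combination (n * n' * omg k : ℝ) * ht - n * n' * hs;
         linear_combination (n * n' * omg' k : ℝ) * ht - n * n' * hs]
  · rintro ⟨m, n, rfl⟩
    have hω : (omg k, omg' k) ∈ R k := Subring.subset_closure rfl
    have : ((m : ℝ) + n * omg k, (m : ℝ) + n * omg' k) =
        (m : ℝ × ℝ) + (n : ℝ × ℝ) * (omg k, omg' k) := by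
      ext <;> simp
    rw [this]
    exact add_mem (intCast_mem _ m) (mul_mem (intCast_mem _ n) hω)

lemma exists_Nm_eq_int (z : R k) : ∃ N : ℤ, Nm k z = N := by
  obtain ⟨m, n, hz⟩ := mem_R_iff.1 z.2
  obtain ⟨t, ht⟩ := exists_omg_add_omg'_eq_int (k := k)
  obtain ⟨s, hs⟩ := exists_omg_mul_omg'_eq_int (k := k)
  refine ⟨m ^ 2 + m * n * t + n ^ 2 * s, ?_⟩
  rw [Nm, hz]
  push_cast
  linear_combination (m * n : ℝ) * ht + (n : ℝ) ^ 2 * hs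

lemma Nm_mul (z w : R k) : Nm k (z * w) = Nm k z * Nm k w := by
  simp only [Nm, Subring.coe_mul, Prod.fst_mul, Prod.snd_mul]
  ring

lemma Nm_one : Nm k 1 = 1 := by simp [Nm]

lemma unitVal_fst_mul_snd_sq (u : (R k)ˣ) : ((unitVal k u).1 * (unitVal k u).2) ^ 2 = 1 := by
  obtain ⟨N, hN⟩ := exists_Nm_eq_int (u : R k)
  obtain ⟨N', hN'⟩ := exists_Nm_eq_int (↑u⁻¹ : R k)
  have h : (N * N' : ℝ) = 1 := by rw [← hN, ← hN', ← Nm_mul, Units.mul_inv, Nm_one]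
  have hN1 := Int.isUnit_iff.1 (IsUnit.of_mul_eq_one _ (by exact_mod_cast h : N * N' = 1))
  change Nm k u ^ 2 = 1
  rcases hN1 with rfl | rfl <;> simp [hN]

lemma unitVal_inv_fst (u : (R k)ˣ) : (unitVal k u⁻¹).1 = ((unitVal k u).1)⁻¹ := by
  have h := congrArg (fun z : R k => (z : ℝ × ℝ).1) u.mul_inv
  simp only [Subring.coe_mul, Prod.fst_mul, Subring.coe_one, Prod.fst_one] at h
  exact eq_inv_of_mul_eq_one_right h

lemma unitVal_zpow_fst (e : (R k)ˣ) (n : ℤ) : (unitVal k (e ^ n)).1 = eps k e ^ n := by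
  let emb₁ : R k →* ℝ := ((RingHom.fst ℝ ℝ).comp (R k).subtype).toMonoidHom
  change ((Units.map emb₁ (e ^ n) : ℝˣ) : ℝ) = (Units.map emb₁ e : ℝ) ^ n
  rw [map_zpow, Units.val_zpow_eq_zpow_val]

lemma fst_eq_snd_of_sq_eq_one (hk : 1 < k) {z : R k} (h1 : (z : ℝ × ℝ).1 ^ 2 = 1)
    (h2 : (z : ℝ × ℝ).2 ^ 2 = 1) : (z : ℝ × ℝ).1 = (z : ℝ × ℝ).2 := by
  obtain ⟨m, n, hz⟩ := mem_R_iff.1 z.2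
  set z1 := (z : ℝ × ℝ).1
  set z2 := (z : ℝ × ℝ).2
  by_contra hne
  have hsum : z1 + z2 = 0 := by
    have : (z1 - z2) * (z1 + z2) = 0 := by linear_combination h1 - h2
    exact (mul_eq_zero.1 this).resolve_left (sub_ne_zero.2 hne)
  have hdiff : z1 - z2 = n * (omg k - omg' k) := by
    simp only [z1, z2, hz]
    ring
  -- squaring `n (ω - ω') = z₁ - z₂ = 2 z₁` gives `n² k = k₀²`, impossible for `k > 1`
  have hn : (n : ℝ) ^ 2 * k = k0 k ^ 2 := by
    have hsq : Real.sqrt k ^ 2 = k := Real.sq_sqrt k.cast_nonneg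
    have h4 : (n * (omg k - omg' k)) ^ 2 = 4 := by
      rw [← hdiff]
      linear_combination (z2 - 3 * z1) * hsum + 4 * h1
    rw [omg_sub_omg'] at h4
    have := (k0_pos (k := k)).ne'
    field_simp at h4
    linear_combination h4 / 4 - (n : ℝ) ^ 2 * hsq
  have hn0 : 0 < n ^ 2 := by
    rcases eq_or_ne n 0 with rfl | h
    · push_cast at hn
      nlinarith [k0_pos (k := k)]
    · positivity
  unfold k0 at hn
  split_ifs at hn with hk4
  · have hn' : n ^ 2 * (k : ℤ) = 4 := by
      exact_mod_cast (by linear_combination hn : (n : ℝ) ^ 2 * k = 4)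
    have : k ≤ 4 := by nlinarith
    omega
  · have hn' : n ^ 2 * (k : ℤ) = 1 := by
      exact_mod_cast (by linear_combination hn : (n : ℝ) ^ 2 * k = 1)
    nlinarith

lemma le_abs_unitVal_fst {e : (R k)ˣ} (he : IsFundUnit k e) {v : (R k)ˣ}
    (hv : 1 < |(unitVal k v).1|) : eps k e ≤ |(unitVal k v).1| := by
  rcases abs_cases (unitVal k v).1 with ⟨h, -⟩ | ⟨h, -⟩ <;> rw [h] at hv ⊢
  · exact he.2 v hv
  · have hneg : (unitVal k (-v)).1 = -(unitVal k v).1 := by simp [unitVal]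
    rw [← hneg] at hv ⊢
    exact he.2 (-v) hv

lemma abs_unitVal_fst_eq_one {e : (R k)ˣ} (he : IsFundUnit k e) {u : (R k)ˣ}
    (h1 : (eps k e)⁻¹ < |(unitVal k u).1|) (h2 : |(unitVal k u).1| < eps k e) :
    |(unitVal k u).1| = 1 := by
  have hε : 0 < eps k e := zero_lt_one.trans he.1
  rcases lt_trichotomy |(unitVal k u).1| 1 with hlt | heq | hgt
  · have hpos : 0 < |(unitVal k u).1| := (inv_pos.2 hε).trans h1
    have hinv : 1 < |(unitVal k u⁻¹).1| := by
      rw [unitVal_inv_fst, abs_inv]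
      exact (one_lt_inv₀ hpos).2 hlt
    have := le_abs_unitVal_fst he hinv
    rw [unitVal_inv_fst, abs_inv] at this
    exact absurd ((le_inv_comm₀ hε hpos).1 this) h1.not_ge
  · exact heq
  · exact absurd (le_abs_unitVal_fst he hgt) h2.not_ge

def coordForm (a b c d : ℝ) : StrongDual ℝ Pt :=
  LinearMap.toContinuousLinearMap
    { toFun := fun p => a * x1 p + b * x2 p + c * y1 p + d * y2 p
      map_add' := fun p q => by simp only [x1, x2, y1, y2, Prod.fst_add, Prod.snd_add]; ring
      map_smul' := fun t p => by
        simp only [x1, x2, y1, y2, Prod.smul_fst, Prod.smul_snd, smul_eq_mul, RingHom.id_apply]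
        ring }

@[simp]
lemma coordForm_apply (a b c d : ℝ) (p : Pt) :
    coordForm a b c d p = a * x1 p + b * x2 p + c * y1 p + d * y2 p := rfl

def FInfForms (k : ℕ) (ε : ℝ) : Fin 4 → StrongDual ℝ Pt :=
  ![coordForm (omg' k / (omg' k - omg k)) (-omg k / (omg' k - omg k)) 0 0,
    coordForm (1 / (omg k - omg' k)) (-1 / (omg k - omg' k)) 0 0,
    coordForm 0 0 1 (-ε ^ 2),
    coordForm 0 0 (-ε ^ 2) 1]

def FInfBounds : Fin 4 → Set ℝ := ![Icc (-(1 / 2)) (1 / 2), Icc (-(1 / 2)) (1 / 2), Iic 0, Iic 0]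

lemma FInfForms_ne_zero (hk : 0 < k) (i : Fin 4) : FInfForms k ε i ≠ 0 := by
  have hω := (omg_sub_omg'_pos hk).ne'
  have hω' : omg' k - omg k ≠ 0 := (by linarith [omg_sub_omg'_pos hk] : omg' k - omg k < 0).ne
  have hω0 : omg k ≠ 0 := by
    unfold omg
    have := k0_pos (k := k)
    positivity
  intro h
  fin_cases i
  · simpa [FInfForms, x1, x2, y1, y2, hω0, hω'] using congr($h (0, 1, 0, 0))
  · simpa [FInfForms, x1, x2, y1, y2, hω] using congr($h (1, 0, 0, 0))
  · simpa [FInfForms, x1, x2, y1, y2] using congr($h (0, 0, 1, 0))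
  · simpa [FInfForms, x1, x2, y1, y2] using congr($h (0, 0, 0, 1))

lemma mem_iInter_FInfForms_preimage {T : Fin 4 → Set ℝ} {p : Pt} :
    p ∈ ⋂ i, FInfForms k ε i ⁻¹' T i ↔ s1 k p ∈ T 0 ∧ s2 k p ∈ T 1 ∧
      y1 p - ε ^ 2 * y2 p ∈ T 2 ∧ y2 p - ε ^ 2 * y1 p ∈ T 3 := by
  simp only [FInfForms, one_div, mem_iInter, mem_preimage, Fin.forall_fin_succ, Fin.isValue,
    Matrix.cons_val_zero, coordForm_apply, zero_mul, add_zero, Matrix.cons_val_succ,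
    Fin.succ_zero_eq_one, Fin.succ_one_eq_two, one_mul, zero_add, neg_mul,
    Matrix.cons_val_fin_one, Fin.reduceSucc, IsEmpty.forall_iff, and_true, s1, s2]
  ring_nf

lemma isOpen_HH : IsOpen HH := by
  simp only [HH, y1, y2, ofPred_and]
  exact (isOpen_lt continuous_const (by fun_prop)).inter (isOpen_lt continuous_const (by fun_prop))

lemma inv_le_rr_iff {c : ℝ} (hc : 0 < c) {p : Pt} (hp : p ∈ HH) :
    c⁻¹ ≤ rr p ↔ y2 p - c * y1 p ≤ 0 := by
  rw [rr, le_div_iff₀ hp.2, inv_mul_le_iff₀ hc, sub_nonpos]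

lemma rr_le_iff {c : ℝ} {p : Pt} (hp : p ∈ HH) : rr p ≤ c ↔ y1 p - c * y2 p ≤ 0 := by
  rw [rr, div_le_iff₀ hp.2, sub_nonpos]

lemma inv_lt_rr_iff {c : ℝ} (hc : 0 < c) {p : Pt} (hp : p ∈ HH) :
    c⁻¹ < rr p ↔ y2 p - c * y1 p < 0 := by
  rw [rr, lt_div_iff₀ hp.2, inv_mul_lt_iff₀ hc, sub_neg]

lemma rr_lt_iff {c : ℝ} {p : Pt} (hp : p ∈ HH) : rr p < c ↔ y1 p - c * y2 p < 0 := by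
  rw [rr, div_lt_iff₀ hp.2, sub_neg]

lemma FInf_eq (hε : ε ≠ 0) : FInf k ε = HH ∩ ⋂ i, FInfForms k ε i ⁻¹' FInfBounds i := by
  ext p
  simp only [FInf, mem_inter_iff, mem_iInter_FInfForms_preimage, FInfBounds, Matrix.cons_val,
    mem_Icc, mem_Iic, abs_le]
  refine and_congr_right fun hp => ?_
  rw [inv_le_rr_iff (by positivity) hp, rr_le_iff hp]
  tauto

lemma mem_interior_FInf (hk : 0 < k) (hε : ε ≠ 0) {p : Pt} (hp : p ∈ interior (FInf k ε)) :
    p ∈ HH ∧ |s1 k p| < 1 / 2 ∧ |s2 k p| < 1 / 2 ∧ rr p ∈ Ioo (ε ^ 2)⁻¹ (ε ^ 2) := by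
  rw [FInf_eq hε, interior_inter_iInter_preimage isOpen_HH (FInfForms_ne_zero hk)] at hp
  simp only [mem_inter_iff, mem_iInter_FInfForms_preimage, FInfBounds, Matrix.cons_val,
    interior_Icc, interior_Iic, mem_Ioo, mem_Iio] at hp
  obtain ⟨hpH, ⟨h1, h1'⟩, ⟨h2, h2'⟩, h3, h4⟩ := hp
  exact ⟨hpH, abs_lt.2 ⟨h1, h1'⟩, abs_lt.2 ⟨h2, h2'⟩, (inv_lt_rr_iff (by positivity) hpH).2 h4,
    (rr_lt_iff hpH).2 h3⟩

lemma volume_frontier_FInf_inter_HH (hk : 0 < k) (hε : ε ≠ 0) :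
    volume (frontier (FInf k ε) ∩ HH) = 0 := by
  rw [FInf_eq hε]
  refine measure_mono_null (frontier_inter_iInter_preimage_subset isOpen_HH
    (FInfForms_ne_zero hk)) (measure_iUnion_null fun i => ?_)
  refine addHaar_preimage_countable_eq_zero volume (FInfForms_ne_zero hk i) ?_
  fin_cases i <;> simp [FInfBounds, frontier_Icc]

lemma moeb_of_mul_eq_one {a b d : ℝ} (h : a * d = 1) (x y : ℝ) :
    moeb a b 0 d x y = (a ^ 2 * x + a * b, a ^ 2 * y) := by
  have hd : d ≠ 0 := right_ne_zero_of_mul_eq_one h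
  obtain rfl : a = d⁻¹ := eq_inv_of_mul_eq_one_left h
  simp only [moeb]
  ext <;> field_simp <;> ring

lemma act_of_lowerLeft_eq_zero {g : SL k} (hc : g.1 1 0 = 0) (p : Pt) :
    act k g p =
      ((g.1 0 0 : ℝ × ℝ).1 ^ 2 * x1 p + (g.1 0 0 : ℝ × ℝ).1 * (g.1 0 1 : ℝ × ℝ).1,
        (g.1 0 0 : ℝ × ℝ).2 ^ 2 * x2 p + (g.1 0 0 : ℝ × ℝ).2 * (g.1 0 1 : ℝ × ℝ).2,
        (g.1 0 0 : ℝ × ℝ).1 ^ 2 * y1 p, (g.1 0 0 : ℝ × ℝ).2 ^ 2 * y2 p) := by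
  have hdet := congrArg (fun z : R k => (z : ℝ × ℝ))
    (Matrix.SpecialLinearGroup.fin_two_diag_mul_eq_one hc)
  simp only [Subring.coe_mul, Subring.coe_one, Prod.ext_iff, Prod.fst_mul, Prod.snd_mul,
    Prod.fst_one, Prod.snd_one] at hdet
  simp only [act, hc, ZeroMemClass.coe_zero, Prod.fst_zero, Prod.snd_zero,
    moeb_of_mul_eq_one hdet.1, moeb_of_mul_eq_one hdet.2]

lemma rr_act_of_lowerLeft_eq_zero {g : SL k} (hc : g.1 1 0 = 0)
    (ha : ((g.1 0 0 : ℝ × ℝ).1 * (g.1 0 0 : ℝ × ℝ).2) ^ 2 = 1) (p : Pt) :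
    rr (act k g p) = (g.1 0 0 : ℝ × ℝ).1 ^ 4 * rr p := by
  have hinv : ((g.1 0 0 : ℝ × ℝ).2 ^ 2)⁻¹ = (g.1 0 0 : ℝ × ℝ).1 ^ 2 :=
    inv_eq_of_mul_eq_one_left (by linear_combination ha)
  rw [act_of_lowerLeft_eq_zero hc]
  simp only [rr, y1, y2, div_eq_mul_inv, mul_inv, hinv]
  ring

def translate (z : ℝ × ℝ) (p : Pt) : Pt := (x1 p + z.1, x2 p + z.2, y1 p, y2 p)

lemma s1_translate (hk : 0 < k) (m n : ℝ) (p : Pt) :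
    s1 k (translate (m + n * omg k, m + n * omg' k) p) = s1 k p + m := by
  have : omg' k - omg k ≠ 0 := (by linarith [omg_sub_omg'_pos hk] : omg' k - omg k < 0).ne
  simp only [s1, translate, x1, x2]
  field_simp
  ring

lemma s2_translate (hk : 0 < k) (m n : ℝ) (p : Pt) :
    s2 k (translate (m + n * omg k, m + n * omg' k) p) = s2 k p + n := by
  have := (omg_sub_omg'_pos hk).ne'
  simp only [s2, translate, x1, x2]
  field_simp
  ring

lemma act_eq_translate {g : SL k} (hc : g.1 1 0 = 0) (h1 : (g.1 0 0 : ℝ × ℝ).1 ^ 2 = 1)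
    (h2 : (g.1 0 0 : ℝ × ℝ).2 ^ 2 = 1) (p : Pt) :
    act k g p = translate ((g.1 0 0 * g.1 0 1 : R k) : ℝ × ℝ) p := by
  rw [act_of_lowerLeft_eq_zero hc, h1, h2]
  simp [translate, x1, x2, y1, y2]

def upperTri (u : (R k)ˣ) (b : R k) : SL k :=
  ⟨!![(u : R k), b; 0, ((u⁻¹ : (R k)ˣ) : R k)], by simp [Matrix.det_fin_two_of]⟩

lemma exists_mem_act_image_FInf (hk : 0 < k) {e : (R k)ˣ} (he : IsFundUnit k e) {p : Pt}
    (hp : p ∈ HH) : ∃ g : SL k, g.1 1 0 = 0 ∧ p ∈ act k g '' FInf k (eps k e) := by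
  obtain ⟨n, hn⟩ := exists_div_zpow_pow_four_mem_Icc he.1 (div_pos hp.1 hp.2)
  set a : ℝ × ℝ := (((e ^ n : (R k)ˣ) : R k) : ℝ × ℝ)
  have hN : (a.1 * a.2) ^ 2 = 1 := unitVal_fst_mul_snd_sq (e ^ n)
  have ha : a.1 ≠ 0 ∧ a.2 ≠ 0 := mul_ne_zero_iff.1 fun h => by simp [h] at hN
  -- rescale `p` by `diag(ε₀⁻ⁿ, ε₀ⁿ)`, then translate by the nearest point `β` of `R`
  set p' : Pt := (x1 p / a.1 ^ 2, x2 p / a.2 ^ 2, y1 p / a.1 ^ 2, y2 p / a.2 ^ 2)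
  set m := round (s1 k p')
  set m' := round (s2 k p')
  set β : R k := ⟨(m + m' * omg k, m + m' * omg' k), mem_R_iff.2 ⟨m, m', rfl⟩⟩
  have hβ : -(β : ℝ × ℝ) = ((-m : ℤ) + (-m' : ℤ) * omg k, (-m : ℤ) + (-m' : ℤ) * omg' k) := by
    ext <;> simp only [β, Prod.neg_mk, Int.cast_neg] <;> ring
  set q := translate (-(β : ℝ × ℝ)) p'
  refine ⟨upperTri (e ^ n) ((e ^ n : (R k)ˣ) * β), rfl, q, ?_, ?_⟩
  · have hqH : q ∈ HH :=
      ⟨div_pos hp.1 (sq_pos_of_ne_zero ha.1), div_pos hp.2 (sq_pos_of_ne_zero ha.2)⟩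
    have hs1 : s1 k q = s1 k p' - m := by
      simp only [q, hβ, s1_translate hk, Int.cast_neg, sub_eq_add_neg]
    have hs2 : s2 k q = s2 k p' - m' := by
      simp only [q, hβ, s2_translate hk, Int.cast_neg, sub_eq_add_neg]
    have hrr : rr q = rr p / (eps k e ^ n) ^ 4 := by
      rw [← unitVal_zpow_fst]
      change y1 p / a.1 ^ 2 / (y2 p / a.2 ^ 2) = y1 p / y2 p / a.1 ^ 4
      rw [eq_inv_of_mul_eq_one_right (by linear_combination hN : a.1 ^ 2 * a.2 ^ 2 = 1)]
      field_simp
    refine ⟨hqH, ?_, ?_, ?_⟩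
    · rw [hs1]; exact abs_sub_round _
    · rw [hs2]; exact abs_sub_round _
    · rwa [hrr]
  · rw [act_of_lowerLeft_eq_zero rfl]
    simp only [upperTri, Fin.isValue, Matrix.of_apply, Matrix.cons_val', Matrix.cons_val_zero,
      Matrix.cons_val_fin_one, Matrix.cons_val_one, Subring.coe_mul, Prod.fst_mul, Prod.snd_mul,
      show (((e ^ n : (R k)ˣ) : R k) : ℝ × ℝ) = a from rfl]
    ext <;> simp only [q, p', translate, x1, x2, y1, y2, Prod.fst_neg, Prod.snd_neg] <;>
      field_simp [ha.1, ha.2] <;> ring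

lemma upperRight_eq_zero (hk : 0 < k) {g : SL k} (hc : g.1 1 0 = 0)
    (h1 : (g.1 0 0 : ℝ × ℝ).1 ^ 2 = 1) (h2 : (g.1 0 0 : ℝ × ℝ).2 ^ 2 = 1) {p : Pt}
    (hp1 : |s1 k p| < 1 / 2) (hp2 : |s2 k p| < 1 / 2)
    (hq1 : |s1 k (act k g p)| < 1 / 2) (hq2 : |s2 k (act k g p)| < 1 / 2) : g.1 0 1 = 0 := by
  obtain ⟨m, n, hmn⟩ := mem_R_iff.1 (g.1 0 0 * g.1 0 1).2
  rw [act_eq_translate hc h1 h2, hmn] at hq1 hq2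
  rw [s1_translate hk] at hq1
  rw [s2_translate hk] at hq2
  have hab : g.1 0 0 * g.1 0 1 = 0 := by
    ext1
    simp [hmn, Int.eq_zero_of_abs_lt_half hp1 hq1, Int.eq_zero_of_abs_lt_half hp2 hq2]
  calc g.1 0 1 = (g.1 1 1 * g.1 0 0) * g.1 0 1 := by
        rw [mul_comm (g.1 1 1), Matrix.SpecialLinearGroup.fin_two_diag_mul_eq_one hc, one_mul]
    _ = 0 := by rw [mul_assoc, hab, mul_zero]

lemma eq_one_or_coe_eq_neg_one_of_act_mem_interior (hk : 1 < k) {e : (R k)ˣ}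
    (he : IsFundUnit k e) {g : SL k} (hc : g.1 1 0 = 0) {p : Pt}
    (hp : p ∈ interior (FInf k (eps k e))) (hq : act k g p ∈ interior (FInf k (eps k e))) :
    g = 1 ∨ g.1 = -1 := by
  have hε : 0 < eps k e := zero_lt_one.trans he.1
  obtain ⟨-, hp1, hp2, hpr⟩ := mem_interior_FInf (by omega) hε.ne' hp
  obtain ⟨-, hq1, hq2, hqr⟩ := mem_interior_FInf (by omega) hε.ne' hq
  obtain ⟨u, hu⟩ := IsUnit.of_mul_eq_one _ (Matrix.SpecialLinearGroup.fin_two_diag_mul_eq_one hc)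
  have hN : ((g.1 0 0 : ℝ × ℝ).1 * (g.1 0 0 : ℝ × ℝ).2) ^ 2 = 1 :=
    hu ▸ unitVal_fst_mul_snd_sq u
  rw [rr_act_of_lowerLeft_eq_zero hc hN] at hqr
  obtain ⟨hlo, hhi⟩ := abs_mem_Ioo_of_pow_four_mul_mem_Ioo hε hpr hqr
  have habs : |(g.1 0 0 : ℝ × ℝ).1| = 1 := by
    rw [← hu] at hlo hhi ⊢
    exact abs_unitVal_fst_eq_one he hlo hhi
  have h1 : (g.1 0 0 : ℝ × ℝ).1 ^ 2 = 1 := by rw [← sq_abs, habs, one_pow]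
  have h2 : (g.1 0 0 : ℝ × ℝ).2 ^ 2 = 1 := by
    linear_combination hN - (g.1 0 0 : ℝ × ℝ).2 ^ 2 * h1
  have ha : g.1 0 0 = 1 ∨ g.1 0 0 = -1 := by
    have h12 := fst_eq_snd_of_sq_eq_one hk h1 h2
    rcases abs_eq_abs.1 (habs.trans abs_one.symm) with h | h
    · left; ext1; exact Prod.ext h (h12 ▸ h)
    · right; ext1; exact Prod.ext h (h12 ▸ h)
  exact Matrix.SpecialLinearGroup.eq_one_or_coe_eq_neg_one hc
    (upperRight_eq_zero (by omega) hc h1 h2 hp1 hp2 hq1 hq2) ha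

theorem FInf_isFundamentalDomain_general (k : ℕ) (hk1 : 1 < k)
    (e : (R k)ˣ) (he : IsFundUnit k e) :
    MeasureTheory.volume (frontier (FInf k (eps k e)) ∩ HH) = 0 ∧
    (∀ p ∈ HH, ∃ g : SL k, g.1 1 0 = 0 ∧ p ∈ act k g '' FInf k (eps k e)) ∧
    (∀ g : SL k, g.1 1 0 = 0 → g ≠ 1 → g.1 ≠ -1 →
      ¬ ∃ p : Pt, p ∈ interior (FInf k (eps k e)) ∧
        act k g p ∈ interior (FInf k (eps k e))) := by
  have hε : eps k e ≠ 0 := (zero_lt_one.trans he.1).ne'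
  refine ⟨volume_frontier_FInf_inter_HH (by omega) hε,
    fun p hp => exists_mem_act_image_FInf (by omega) he hp, ?_⟩
  rintro g hc hg1 hgm1 ⟨p, hp, hq⟩
  exact (eq_one_or_coe_eq_neg_one_of_act_mem_interior hk1 he hc hp hq).elim hg1 hgm1

/-- `F_∞` is a fundamental domain for the action of `Γ_∞` (the stabilizer of
`∞` in `Γ = PSL₂(R)`, given by the elements of `SL₂(R)` with lower-left entry `0`) on `H²×H²`:
the boundary of `F_∞` (taken in `H²×H²`) has Lebesgue measure `0`, the translates `γ(F_∞)`
for `γ ∈ Γ_∞` cover `H²×H²`, and for `γ ∈ Γ_∞` with `γ ≠ 1` in `PSL₂(R)` (i.e. `γ ≠ ±1` in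
`SL₂(R)`) there is no point `Z` with both `Z` and `γ(Z)` in the interior of `F_∞`. -/
theorem FInf_isFundamentalDomain (k : ℕ) (hk : Squarefree k) (hk1 : 1 < k)
    (e : (R k)ˣ) (he : IsFundUnit k e) :
    MeasureTheory.volume (frontier (FInf k (eps k e)) ∩ HH) = 0 ∧
    (∀ p ∈ HH, ∃ g : SL k, g.1 1 0 = 0 ∧ p ∈ act k g '' FInf k (eps k e)) ∧
    (∀ g : SL k, g.1 1 0 = 0 → g ≠ 1 → g.1 ≠ -1 →
      ¬ ∃ p : Pt, p ∈ interior (FInf k (eps k e)) ∧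
        act k g p ∈ interior (FInf k (eps k e))) :=
  FInf_isFundamentalDomain_general k hk1 e he

end Hilbert
end
end

section
/- F₀ equals the set of points of H²×H² of maximal height in their Γ-orbit; that is, F₀ = {Z ∈ H²×H² : h(γ(Z)) ≤ h(Z) for every γ ∈ Γ}. -/
noncomputable section

open scoped Classical
open MeasureTheory

namespace Hilbert

private lemma det1 (k : ℕ) (g : SL k) :
    ((g.1 0 0 : ℝ × ℝ)).1 * ((g.1 1 1 : ℝ × ℝ)).1
      - ((g.1 0 1 : ℝ × ℝ)).1 * ((g.1 1 0 : ℝ × ℝ)).1 = 1 := by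
  have h := g.2
  rw [Matrix.det_fin_two] at h
  have := congrArg (fun r : R k => ((r : ℝ × ℝ)).1) h
  simpa using this

private lemma det2 (k : ℕ) (g : SL k) :
    ((g.1 0 0 : ℝ × ℝ)).2 * ((g.1 1 1 : ℝ × ℝ)).2
      - ((g.1 0 1 : ℝ × ℝ)).2 * ((g.1 1 0 : ℝ × ℝ)).2 = 1 := by
  have h := g.2
  rw [Matrix.det_fin_two] at h
  have := congrArg (fun r : R k => ((r : ℝ × ℝ)).2) h
  simpa using this

private lemma denom_pos {a b c d x y : ℝ} (hy : 0 < y) (hdet : a * d - b * c = 1) :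
    0 < (c * x + d) ^ 2 + c ^ 2 * y ^ 2 := by
  rcases eq_or_ne c 0 with hc | hc
  · subst hc
    have hd : d ≠ 0 := by intro h; rw [h] at hdet; simp at hdet
    simp only [zero_mul, zero_add, ne_eq]
    positivity
  · positivity

private lemma hh_act_eq (k : ℕ) (g : SL k) (p : Pt) (hp : p ∈ HH) :
    0 < HNorm ((g.1 1 0 : R k) : ℝ × ℝ) ((g.1 1 1 : R k) : ℝ × ℝ) p ∧
      hh (act k g p) =
        hh p / HNorm ((g.1 1 0 : R k) : ℝ × ℝ) ((g.1 1 1 : R k) : ℝ × ℝ) p := by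
  obtain ⟨hy1, hy2⟩ := hp
  have hD1 : 0 < ((((g.1 1 0 : R k) : ℝ × ℝ)).1 * x1 p + (((g.1 1 1 : R k) : ℝ × ℝ)).1) ^ 2
      + (((g.1 1 0 : R k) : ℝ × ℝ)).1 ^ 2 * y1 p ^ 2 := denom_pos hy1 (det1 k g)
  have hD2 : 0 < ((((g.1 1 0 : R k) : ℝ × ℝ)).2 * x2 p + (((g.1 1 1 : R k) : ℝ × ℝ)).2) ^ 2
      + (((g.1 1 0 : R k) : ℝ × ℝ)).2 ^ 2 * y2 p ^ 2 := denom_pos hy2 (det2 k g)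
  have hN : 0 < HNorm ((g.1 1 0 : R k) : ℝ × ℝ) ((g.1 1 1 : R k) : ℝ × ℝ) p :=
    mul_pos hD1 hD2
  refine ⟨hN, ?_⟩
  simp only [hh, act, moeb, y1, y2, HNorm] at *
  field_simp

/-- `F₀` equals the set of points of `H²×H²` of maximal height in their
`Γ`-orbit: `F₀ = {Z ∈ H²×H² : h(γ(Z)) ≤ h(Z) for every γ ∈ Γ}`. -/
theorem F0_eq_maximalHeight (k : ℕ) (hk : Squarefree k) (hk1 : 1 < k) :
    F0 k = {p ∈ HH | ∀ g : SL k, hh (act k g p) ≤ hh p} := by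
  ext p
  simp only [F0, Set.mem_sep_iff, Set.mem_setOf_eq]
  constructor
  · rintro ⟨hp, hF⟩
    refine ⟨hp, fun g => ?_⟩
    obtain ⟨hN, heq⟩ := hh_act_eq k g p hp
    have hsp : (g.1 1 0, g.1 1 1) ∈ Spairs k := by
      rw [Spairs, Set.mem_setOf_eq, Ideal.eq_top_iff_one, Ideal.mem_span_pair]
      refine ⟨-(g.1 0 1), g.1 0 0, ?_⟩
      have h := g.2
      rw [Matrix.det_fin_two] at h
      linear_combination h
    have h1 := hF (g.1 1 0, g.1 1 1) hsp
    rw [heq]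
    have hhp : 0 < hh p := mul_pos hp.1 hp.2
    exact div_le_self hhp.le h1
  · rintro ⟨hp, hmax⟩
    refine ⟨hp, fun cd hcd => ?_⟩
    have h1 : (1 : R k) ∈ Ideal.span {cd.1, cd.2} := by
      rw [hcd]; exact Submodule.mem_top
    rw [Ideal.mem_span_pair] at h1
    obtain ⟨u, v, huv⟩ := h1
    set g : SL k := ⟨!![v, -u; cd.1, cd.2], by
      rw [Matrix.det_fin_two_of]; linear_combination huv⟩ with hg
    obtain ⟨hN, heq⟩ := hh_act_eq k g p hp
    have hent0 : g.1 1 0 = cd.1 := by simp [hg]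
    have hent1 : g.1 1 1 = cd.2 := by simp [hg]
    have hle := hmax g
    rw [heq, hent0, hent1] at hle
    rw [hent0, hent1] at hN
    have hhp : 0 < hh p := mul_pos hp.1 hp.2
    rw [div_le_iff₀ hN] at hle
    nlinarith

end Hilbert
end
end

section
/- The set F is path-connected. -/
noncomputable section

open scoped Classical
open MeasureTheory

namespace Hilbert

/-! The part of `F_∞` where `y₁y₂ ≥ 1` lies in `F`: a nonzero `c ∈ R` has `N(c) ∈ ℤ \ {0}`
(as `√k` is irrational), so `‖cZ+d‖ ≥ N(c)²(y₁y₂)² ≥ 1`, and for `c = 0` coprimality forces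
`d ≠ 0`, so `‖cZ+d‖ = N(d)² ≥ 1`. That part is convex: it is cut out by half-spaces and the
convex region `y₁y₂ ≥ 1` of the quadrant. Moving a point of `F` up along `y ↦ ty`, `t ≥ 1`,
keeps `s₁, s₂, r` fixed and does not decrease any `‖cZ+d‖`, so it stays in `F` until it
reaches that convex part. -/

section Arithmetic

variable {k : ℕ}

lemma irrational_sqrt_of_squarefree (hk : Squarefree k) (hk1 : 1 < k) :
    Irrational (Real.sqrt k) := by
  rw [irrational_sqrt_natCast_iff]
  rintro ⟨m, rfl⟩
  have := Nat.isUnit_iff.mp (hk m (dvd_refl _))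
  subst this
  omega

lemma exists_k0_eq_natCast (k : ℕ) : ∃ n : ℕ, n ≠ 0 ∧ k0 k = n := by
  unfold k0
  split_ifs
  exacts [⟨2, by norm_num⟩, ⟨1, by norm_num⟩]

lemma irrational_omg (hk : Squarefree k) (hk1 : 1 < k) : Irrational (omg k) := by
  obtain ⟨n, hn, hk0⟩ := exists_k0_eq_natCast k
  rw [omg, hk0]
  simpa using ((irrational_sqrt_of_squarefree hk hk1).natCast_add 1).div_natCast hn

lemma exists_int_omg_add_omg' (k : ℕ) : ∃ t : ℤ, omg k + omg' k = t := by
  unfold omg omg' k0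
  split_ifs
  exacts [⟨1, by ring⟩, ⟨2, by ring⟩]

lemma exists_int_omg_mul_omg' (k : ℕ) : ∃ n : ℤ, omg k * omg' k = n := by
  have hs : Real.sqrt k ^ 2 = k := Real.sq_sqrt (Nat.cast_nonneg k)
  unfold omg omg' k0
  split_ifs with h
  · obtain ⟨m, hm⟩ : (4 : ℤ) ∣ 1 - k := by omega
    refine ⟨m, ?_⟩
    have hm' : (1 : ℝ) - k = 4 * m := by exact_mod_cast hm
    linear_combination (-1 / 4 : ℝ) * hs + (1 / 4 : ℝ) * hm'
  · exact ⟨1 - k, by push_cast; linear_combination -hs⟩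

lemma irrational_omg' (hk : Squarefree k) (hk1 : 1 < k) : Irrational (omg' k) := by
  obtain ⟨t, ht⟩ := exists_int_omg_add_omg' k
  rw [show omg' k = t - omg k by linarith]
  exact (irrational_omg hk hk1).intCast_sub t

lemma exists_int_of_mem_closure_singleton {ω ω' : ℝ} {t n : ℤ} (ht : ω + ω' = t) (hn : ω * ω' = n)
    {p : ℝ × ℝ} (hp : p ∈ Subring.closure {(ω, ω')}) :
    ∃ a b : ℤ, p = (a + b * ω, a + b * ω') := by
  induction hp using Subring.closure_induction with
  | mem x hx => exact ⟨0, 1, by simp [Set.mem_singleton_iff.mp hx]⟩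
  | zero => exact ⟨0, 0, by ext <;> simp⟩
  | one => exact ⟨1, 0, by ext <;> simp⟩
  | add x y _ _ hx hy =>
    obtain ⟨a, b, rfl⟩ := hx
    obtain ⟨c, d, rfl⟩ := hy
    exact ⟨a + c, b + d, by ext <;> simp <;> ring⟩
  | neg x _ hx =>
    obtain ⟨a, b, rfl⟩ := hx
    exact ⟨-a, -b, by ext <;> simp <;> ring⟩
  | mul x y _ _ hx hy =>
    obtain ⟨a, b, rfl⟩ := hx
    obtain ⟨c, d, rfl⟩ := hy
    have hω : ω ^ 2 = t * ω - n := by linear_combination ω * ht - hn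
    have hω' : ω' ^ 2 = t * ω' - n := by linear_combination ω' * ht - hn
    refine ⟨a * c - n * b * d, a * d + b * c + t * b * d, ?_⟩
    ext
    · simp only [Prod.fst_mul]; push_cast; linear_combination (b * d : ℝ) * hω
    · simp only [Prod.snd_mul]; push_cast; linear_combination (b * d : ℝ) * hω'

lemma int_add_int_mul_ne_zero {ω : ℝ} (hω : Irrational ω) {a b : ℤ} (hab : a ≠ 0 ∨ b ≠ 0) :
    (a : ℝ) + b * ω ≠ 0 := by
  by_cases hb : b = 0
  · simpa [hb] using hab
  · exact ((hω.intCast_mul hb).intCast_add a).ne_zero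

lemma one_le_sq_Nm (hk : Squarefree k) (hk1 : 1 < k) {c : R k} (hc : c ≠ 0) :
    1 ≤ Nm k c ^ 2 := by
  obtain ⟨t, ht⟩ := exists_int_omg_add_omg' k
  obtain ⟨n, hn⟩ := exists_int_omg_mul_omg' k
  obtain ⟨a, b, hab⟩ := exists_int_of_mem_closure_singleton ht hn c.2
  have hab0 : a ≠ 0 ∨ b ≠ 0 := by
    by_contra! h
    exact hc (Subtype.ext (by simp [hab, h.1, h.2]))
  have hNm : Nm k c = (a ^ 2 + t * a * b + n * b ^ 2 : ℤ) := by
    rw [Nm, hab]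
    push_cast
    linear_combination (a * b : ℝ) * ht + (b ^ 2 : ℝ) * hn
  have hNm0 : a ^ 2 + t * a * b + n * b ^ 2 ≠ 0 := by
    intro h0
    rw [h0, Nm, hab] at hNm
    rcases mul_eq_zero.mp (by exact_mod_cast hNm) with h | h
    · exact int_add_int_mul_ne_zero (irrational_omg hk hk1) hab0 h
    · exact int_add_int_mul_ne_zero (irrational_omg' hk hk1) hab0 h
  rw [hNm]
  exact_mod_cast (one_le_sq_iff_one_le_abs _).mpr (Int.one_le_abs hNm0)

end Arithmetic

section Geometry

variable {k : ℕ} {ε : ℝ}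

lemma sq_mul_sq_hh_le_HNorm (c d : ℝ × ℝ) (p : Pt) :
    (c.1 * c.2) ^ 2 * hh p ^ 2 ≤ HNorm c d p := by
  have h1 : c.1 ^ 2 * y1 p ^ 2 ≤ (c.1 * x1 p + d.1) ^ 2 + c.1 ^ 2 * y1 p ^ 2 :=
    le_add_of_nonneg_left (sq_nonneg _)
  have h2 : c.2 ^ 2 * y2 p ^ 2 ≤ (c.2 * x2 p + d.2) ^ 2 + c.2 ^ 2 * y2 p ^ 2 :=
    le_add_of_nonneg_left (sq_nonneg _)
  calc (c.1 * c.2) ^ 2 * hh p ^ 2 = (c.1 ^ 2 * y1 p ^ 2) * (c.2 ^ 2 * y2 p ^ 2) := by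
        rw [hh]; ring
    _ ≤ HNorm c d p := mul_le_mul h1 h2 (by positivity) (by positivity)

lemma HNorm_zero_left (d : ℝ × ℝ) (p : Pt) : HNorm 0 d p = (d.1 * d.2) ^ 2 := by
  simp only [HNorm, Prod.fst_zero, Prod.snd_zero]
  ring

lemma one_le_HNorm_of_one_le_hh (hk : Squarefree k) (hk1 : 1 < k) {cd : R k × R k}
    (hcd : cd ∈ Spairs k) {p : Pt} (hp : 1 ≤ hh p) :
    1 ≤ HNorm (cd.1 : ℝ × ℝ) (cd.2 : ℝ × ℝ) p := by
  obtain ⟨c, d⟩ := cd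
  by_cases hc : c = 0
  · subst hc
    have hd : d ≠ 0 := by
      rintro rfl
      simp [Spairs] at hcd
    rw [ZeroMemClass.coe_zero, HNorm_zero_left]
    exact one_le_sq_Nm hk hk1 hd
  · calc 1 ≤ Nm k c ^ 2 * hh p ^ 2 :=
          one_le_mul_of_one_le_of_one_le (one_le_sq_Nm hk hk1 hc) (one_le_pow₀ hp)
      _ ≤ _ := sq_mul_sq_hh_le_HNorm _ _ _

def vscale (t : ℝ) (p : Pt) : Pt := (x1 p, x2 p, t * y1 p, t * y2 p)

lemma vscale_one (p : Pt) : vscale 1 p = p := by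
  simp [vscale, x1, x2, y1, y2]

lemma continuous_vscale (p : Pt) : Continuous fun t => vscale t p := by
  unfold vscale
  fun_prop

lemma hh_vscale (t : ℝ) (p : Pt) : hh (vscale t p) = t ^ 2 * hh p := by
  simp only [hh, vscale, y1, y2]
  ring

lemma rr_vscale {t : ℝ} (ht : t ≠ 0) (p : Pt) : rr (vscale t p) = rr p :=
  mul_div_mul_left _ _ ht

lemma HNorm_le_HNorm_vscale (c d : ℝ × ℝ) (p : Pt) {t : ℝ} (ht : 1 ≤ t) :
    HNorm c d p ≤ HNorm c d (vscale t p) := by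
  have hy (c y : ℝ) : c ^ 2 * y ^ 2 ≤ c ^ 2 * (t * y) ^ 2 := by
    calc c ^ 2 * y ^ 2 = 1 * (c ^ 2 * y ^ 2) := (one_mul _).symm
      _ ≤ t ^ 2 * (c ^ 2 * y ^ 2) := by gcongr; exact one_le_pow₀ ht
      _ = c ^ 2 * (t * y) ^ 2 := by ring
  simp only [HNorm, vscale, x1, x2, y1, y2]
  exact mul_le_mul (add_le_add le_rfl (hy _ _)) (add_le_add le_rfl (hy _ _))
    (by positivity) (by positivity)

lemma vscale_mem_FInf {p : Pt} (hp : p ∈ FInf k ε) {t : ℝ} (ht : 0 < t) :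
    vscale t p ∈ FInf k ε := by
  obtain ⟨⟨hy1, hy2⟩, hs1, hs2, hr⟩ := hp
  exact ⟨⟨mul_pos ht hy1, mul_pos ht hy2⟩, hs1, hs2, by rwa [rr_vscale ht.ne']⟩

lemma vscale_mem_F0 {p : Pt} (hp : p ∈ F0 k) {t : ℝ} (ht : 1 ≤ t) : vscale t p ∈ F0 k := by
  obtain ⟨⟨hy1, hy2⟩, hN⟩ := hp
  have ht0 : 0 < t := by linarith
  exact ⟨⟨mul_pos ht0 hy1, mul_pos ht0 hy2⟩,
    fun cd hcd => (hN cd hcd).trans (HNorm_le_HNorm_vscale _ _ p ht)⟩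

lemma joinedIn_vscale {p : Pt} (hp : p ∈ F k ε) {t : ℝ} (ht : 1 ≤ t) :
    JoinedIn (F k ε) p (vscale t p) := by
  have hI : JoinedIn (Set.Icc 1 t) 1 t := JoinedIn.of_segment_subset (segment_eq_Icc ht).subset
  have hJ := hI.map (continuous_vscale p)
  rw [vscale_one] at hJ
  exact hJ.mono <| Set.image_subset_iff.2 fun s hs =>
    ⟨vscale_mem_FInf hp.1 (by linarith [hs.1]), vscale_mem_F0 hp.2 hs.1⟩

end Geometry

section Convexity

variable {E : Type*} [AddCommGroup E] [Module ℝ E]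

lemma convex_setOf_abs_le {f : E → ℝ} (hf : IsLinearMap ℝ f) (r : ℝ) :
    Convex ℝ {x | |f x| ≤ r} := by
  simp only [abs_le, Set.ofPred_and]
  exact (convex_halfSpace_ge hf _).inter (convex_halfSpace_le hf _)

lemma convex_setOf_le_mul {f g : E → ℝ} (hf : IsLinearMap ℝ f) (hg : IsLinearMap ℝ g)
    (c : ℝ) : Convex ℝ {x | f x ≤ c * g x} := by
  simpa [sub_nonpos] using convex_halfSpace_le (hf.mk' f - c • hg.mk' g).isLinear 0

lemma convex_setOf_one_le_mul : Convex ℝ {q : ℝ × ℝ | 0 < q.1 ∧ 1 ≤ q.1 * q.2} := by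
  have h : {q : ℝ × ℝ | 0 < q.1 ∧ 1 ≤ q.1 * q.2} =
      {q | q.1 ∈ Set.Ioi 0 ∧ q.1 ^ (-1 : ℤ) ≤ q.2} := by
    ext q
    simp only [Set.mem_ofPred_eq, Set.mem_Ioi, zpow_neg_one, and_congr_right_iff]
    exact fun hq => (inv_le_iff_one_le_mul₀' hq).symm
  have hinv : ConvexOn ℝ (Set.Ioi (0 : ℝ)) fun x : ℝ => x ^ (-1 : ℤ) := convexOn_zpow (-1)
  rw [h]
  exact hinv.convex_epigraph

end Convexity

section TopRegion

variable {k : ℕ} {ε : ℝ}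

lemma isLinearMap_y1 : IsLinearMap ℝ y1 := ⟨fun _ _ => rfl, fun _ _ => rfl⟩

lemma isLinearMap_y2 : IsLinearMap ℝ y2 := ⟨fun _ _ => rfl, fun _ _ => rfl⟩

lemma isLinearMap_s1 (k : ℕ) : IsLinearMap ℝ (s1 k) where
  map_add p q := by simp only [s1, x1, x2, Prod.fst_add, Prod.snd_add]; ring
  map_smul c p := by simp only [s1, x1, x2, Prod.smul_fst, Prod.smul_snd, smul_eq_mul]; ring

lemma isLinearMap_s2 (k : ℕ) : IsLinearMap ℝ (s2 k) where
  map_add p q := by simp only [s2, x1, x2, Prod.fst_add, Prod.snd_add]; ring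
  map_smul c p := by simp only [s2, x1, x2, Prod.smul_fst, Prod.smul_snd, smul_eq_mul]; ring

lemma convex_HH : Convex ℝ HH :=
  (convex_halfSpace_gt isLinearMap_y1 0).inter (convex_halfSpace_gt isLinearMap_y2 0)

lemma FInf_eq_inter (hε : ε ≠ 0) :
    FInf k ε = HH ∩ {p | |s1 k p| ≤ 1 / 2} ∩ {p | |s2 k p| ≤ 1 / 2} ∩
      {p | y2 p ≤ ε ^ 2 * y1 p} ∩ {p | y1 p ≤ ε ^ 2 * y2 p} := by
  ext p
  simp only [FInf, Set.mem_inter_iff, Set.mem_ofPred_eq, and_assoc]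
  refine and_congr_right fun hp => ?_
  simp only [rr, le_div_iff₀ hp.2, div_le_iff₀ hp.2, inv_mul_le_iff₀ (by positivity : 0 < ε ^ 2)]

lemma convex_FInf (hε : ε ≠ 0) : Convex ℝ (FInf k ε) := by
  rw [FInf_eq_inter hε]
  exact (((convex_HH.inter (convex_setOf_abs_le (isLinearMap_s1 k) _)).inter
    (convex_setOf_abs_le (isLinearMap_s2 k) _)).inter
    (convex_setOf_le_mul isLinearMap_y2 isLinearMap_y1 _)).inter
    (convex_setOf_le_mul isLinearMap_y1 isLinearMap_y2 _)

def topF (k : ℕ) (ε : ℝ) : Set Pt := {p ∈ FInf k ε | 1 ≤ hh p}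

lemma topF_subset_F (hk : Squarefree k) (hk1 : 1 < k) : topF k ε ⊆ F k ε :=
  fun _ hp => ⟨hp.1, hp.1.1, fun _ hcd => one_le_HNorm_of_one_le_hh hk hk1 hcd hp.2⟩

lemma exists_vscale_mem_topF {p : Pt} (hp : p ∈ FInf k ε) :
    ∃ t, 1 ≤ t ∧ vscale t p ∈ topF k ε := by
  have hh0 : 0 < hh p := mul_pos hp.1.1 hp.1.2
  set t := 1 + (hh p)⁻¹
  have ht : 1 ≤ t := le_add_of_nonneg_right (inv_nonneg.2 hh0.le)
  refine ⟨t, ht, vscale_mem_FInf hp (by linarith), ?_⟩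
  have hth : t * hh p = hh p + 1 := by simp only [t, add_mul, one_mul, inv_mul_cancel₀ hh0.ne']
  rw [hh_vscale, sq, mul_assoc, hth]
  nlinarith

lemma base_mem_topF (hε : 1 ≤ ε) : ((0 : ℝ), (0 : ℝ), (1 : ℝ), (1 : ℝ)) ∈ topF k ε := by
  have hε2 : 1 ≤ ε ^ 2 := one_le_pow₀ hε
  refine ⟨⟨⟨one_pos, one_pos⟩, ?_, ?_, ?_, ?_⟩, ?_⟩ <;>
    simp [s1, s2, rr, hh, x1, x2, y1, y2, hε2, inv_le_one_of_one_le₀ hε2]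

lemma convex_topF (hε : ε ≠ 0) : Convex ℝ (topF k ε) := by
  have h : topF k ε = FInf k ε ∩ (fun p : Pt => p.2.2) ⁻¹' {q | 0 < q.1 ∧ 1 ≤ q.1 * q.2} := by
    ext p
    exact ⟨fun hp => ⟨hp.1, hp.1.1.1, hp.2⟩, fun hp => ⟨hp.1, hp.2.2⟩⟩
  rw [h]
  exact (convex_FInf hε).inter (convex_setOf_one_le_mul.is_linear_preimage
    ((LinearMap.snd ℝ ℝ (ℝ × ℝ)).comp (LinearMap.snd ℝ ℝ (ℝ × ℝ × ℝ))).isLinear)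

end TopRegion

/-- The set `F` is path-connected. -/
theorem F_isPathConnected (k : ℕ) (hk : Squarefree k) (hk1 : 1 < k)
    (e : (R k)ˣ) (he : IsFundUnit k e) :
    IsPathConnected (F k (eps k e)) := by
  set ε := eps k e
  have hε : 1 < ε := he.1
  have hbase := base_mem_topF (k := k) hε.le
  have hpath : IsPathConnected (topF k ε) :=
    (convex_topF (by positivity)).isPathConnected ⟨_, hbase⟩
  refine ⟨_, topF_subset_F hk hk1 hbase, fun {q} hq => ?_⟩
  obtain ⟨t, ht, htop⟩ := exists_vscale_mem_topF hq.1
  exact ((hpath.joinedIn _ hbase _ htop).mono (topF_subset_F hk hk1)).trans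
    (joinedIn_vscale hq ht).symm

end Hilbert
end
end
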